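/- Let H and U₀ be complex Hilbert spaces, let s < T be real numbers, let α ∈ (0,1) and c ≥ 0. Suppose: (i) U(t,r) ∈ L(H) is defined for s ≤ r ≤ t < T, is strongly continuous, uniformly bounded on every compact subset of its domain, and satisfies U(t,t) = I and the evolution property U(t,q)U(q,r) = U(t,r) for s ≤ r ≤ q ≤ t < T; (ii) V(t,r) ∈ L(U₀,H) is defined for s ≤ r < t < T, is continuous in operator norm, satisfies ‖V(t,r)‖ ≤ c (t−r)^{α−1}, and satisfies the factorization V(t,r) = U(t,q)V(q,r) for s ≤ r < q ≤ t < T; (iii) S : [s,T) → L(H,U₀) is continuous in operator norm. For each σ ∈ [s,T) and x ∈ H let t ↦ Φ(t,σ)x be the unique continuous H-valued solution on [σ,T) of y(t) = U(t,σ)x − ∫_σ^t V(t,r)S(r)y(r) dr. Then Φ(t,s)x = Φ(t,q)(Φ(q,s)x) for all s ≤ q ≤ t < T and all x ∈ H. -/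

import Mathlib

/-!
By uniqueness of the solution started at time `q` from `Φ(q,s)x`, it suffices that
`t ↦ Φ(t,s)x`, which is continuous on `[q,T)`, solves that equation.
Splitting `∫_s^t = ∫_s^q + ∫_q^t` and using `U(t,s) = U(t,q)U(q,s)` together with
`V(t,r) = U(t,q)V(q,r)` for `r < q`, the part of the equation on `[s,q]` collapses to
`U(t,q)Φ(q,s)x`. The weakly singular bound on `V` makes every integral involved converge.
-/

open MeasureTheory intervalIntegral Set

theorem intervalIntegrable_of_norm_le_mul_rpow_sub {E : Type*} [NormedAddCommGroup E]
    {f : ℝ → E} {a b t₀ C β : ℝ} (hab : a ≤ b) (hβ : -1 < β) (hf : ContinuousOn f (Ioo a b))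
    (hbound : ∀ r ∈ Ioo a b, ‖f r‖ ≤ C * (t₀ - r) ^ β) :
    IntervalIntegrable f volume a b := by
  have hg : IntervalIntegrable (fun r => C * (t₀ - r) ^ β) volume a b := by
    simpa using
      ((intervalIntegrable_rpow' (a := t₀ - a) (b := t₀ - b) hβ).comp_sub_left t₀).const_mul C
  rw [intervalIntegrable_iff_integrableOn_Ioo_of_le hab] at hg ⊢
  exact hg.mono' (hf.aestronglyMeasurable measurableSet_Ioo)
    ((ae_restrict_mem measurableSet_Ioo).mono hbound)

theorem intervalIntegrable_clm_apply_of_norm_le_mul_rpow_sub {𝕜 E F : Type*}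
    [NontriviallyNormedField 𝕜] [NormedAddCommGroup E] [NormedSpace 𝕜 E]
    [NormedAddCommGroup F] [NormedSpace 𝕜 F] {K : ℝ → E →L[𝕜] F} {g : ℝ → E}
    {a b t₀ C β : ℝ} (hab : a ≤ b) (hβ : -1 < β) (hK : ContinuousOn K (Ioo a b))
    (hg : ContinuousOn g (Icc a b)) (hKbound : ∀ r ∈ Ioo a b, ‖K r‖ ≤ C * (t₀ - r) ^ β) :
    IntervalIntegrable (fun r => K r (g r)) volume a b := by
  obtain ⟨M, hM⟩ := isCompact_Icc.exists_bound_of_continuousOn hg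
  refine intervalIntegrable_of_norm_le_mul_rpow_sub (t₀ := t₀) (C := C * M) hab hβ
    (hK.clm_apply (hg.mono Ioo_subset_Icc_self)) fun r hr => ?_
  calc ‖K r (g r)‖ ≤ ‖K r‖ * ‖g r‖ := (K r).le_opNorm _
    _ ≤ C * (t₀ - r) ^ β * M :=
      mul_le_mul (hKbound r hr) (hM r (Ioo_subset_Icc_self hr)) (norm_nonneg _)
        ((norm_nonneg _).trans (hKbound r hr))
    _ = C * M * (t₀ - r) ^ β := by ring

theorem intervalIntegral_clm_apply_eq_apply_intervalIntegral {𝕜 E F G : Type*} [RCLike 𝕜]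
    [NormedAddCommGroup E] [NormedSpace 𝕜 E] [NormedAddCommGroup F] [NormedSpace 𝕜 F]
    [NormedSpace ℝ F] [CompleteSpace F] [NormedAddCommGroup G] [NormedSpace 𝕜 G]
    [NormedSpace ℝ G] [CompleteSpace G] (L : F →L[𝕜] G) {K₁ : ℝ → E →L[𝕜] G}
    {K₂ : ℝ → E →L[𝕜] F} {g : ℝ → E} {a b : ℝ} (hab : a ≤ b)
    (hK : ∀ r ∈ Ioo a b, K₁ r = L.comp (K₂ r))
    (hint : IntervalIntegrable (fun r => K₂ r (g r)) volume a b) :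
    ∫ r in a..b, K₁ r (g r) = L (∫ r in a..b, K₂ r (g r)) := by
  rw [← L.intervalIntegral_comp_comm hint, integral_of_le hab, integral_of_le hab,
    integral_Ioc_eq_integral_Ioo, integral_Ioc_eq_integral_Ioo]
  exact setIntegral_congr_fun measurableSet_Ioo fun r hr => by rw [hK r hr]; rfl

section ClosedLoop

variable {𝕜 H U₀ : Type*} [RCLike 𝕜] [NormedAddCommGroup H] [NormedSpace 𝕜 H]
  [NormedAddCommGroup U₀] [NormedSpace 𝕜 U₀]

theorem intervalIntegrable_closedLoop_integrand {s T α c : ℝ} (hα : 0 < α)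
    {V : ℝ → ℝ → U₀ →L[𝕜] H} {S : ℝ → H →L[𝕜] U₀} {y : ℝ → H}
    (hVcont : ContinuousOn (fun p : ℝ × ℝ => V p.1 p.2)
      {p : ℝ × ℝ | s ≤ p.2 ∧ p.2 < p.1 ∧ p.1 < T})
    (hVbound : ∀ t r : ℝ, s ≤ r → r < t → t < T → ‖V t r‖ ≤ c * (t - r) ^ (α - 1))
    (hScont : ContinuousOn S (Ico s T)) (hy : ContinuousOn y (Ico s T))
    {a b t : ℝ} (hsa : s ≤ a) (hab : a ≤ b) (hbt : b ≤ t) (htT : t < T) :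
    IntervalIntegrable (fun r => V t r (S r (y r))) volume a b := by
  have hIoo : ∀ r ∈ Ioo a b, s ≤ r ∧ r < t := fun r hr => ⟨hsa.trans hr.1.le, hr.2.trans_le hbt⟩
  refine intervalIntegrable_clm_apply_of_norm_le_mul_rpow_sub hab (by linarith)
    (hVcont.comp (Continuous.prodMk_right t).continuousOn
      fun r hr => ⟨(hIoo r hr).1, (hIoo r hr).2, htT⟩)
    (hScont.clm_apply hy |>.mono fun r hr => ⟨hsa.trans hr.1, (hr.2.trans hbt).trans_lt htT⟩)
    fun r hr => hVbound t r (hIoo r hr).1 (hIoo r hr).2 htT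

variable [NormedSpace ℝ H]

def SolvesClosedLoop (U : ℝ → ℝ → H →L[𝕜] H) (V : ℝ → ℝ → U₀ →L[𝕜] H)
    (S : ℝ → H →L[𝕜] U₀) (σ T : ℝ) (x : H) (y : ℝ → H) : Prop :=
  ∀ t ∈ Ico σ T, y t = U t σ x - ∫ r in σ..t, V t r (S r (y r))

theorem SolvesClosedLoop.restart [CompleteSpace H] {s T α c : ℝ} (hα : 0 < α)
    {U : ℝ → ℝ → H →L[𝕜] H} {V : ℝ → ℝ → U₀ →L[𝕜] H} {S : ℝ → H →L[𝕜] U₀} {x : H} {y : ℝ → H}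
    (hUev : ∀ r q t : ℝ, s ≤ r → r ≤ q → q ≤ t → t < T → (U t q).comp (U q r) = U t r)
    (hVcont : ContinuousOn (fun p : ℝ × ℝ => V p.1 p.2)
      {p : ℝ × ℝ | s ≤ p.2 ∧ p.2 < p.1 ∧ p.1 < T})
    (hVbound : ∀ t r : ℝ, s ≤ r → r < t → t < T → ‖V t r‖ ≤ c * (t - r) ^ (α - 1))
    (hVfact : ∀ r q t : ℝ, s ≤ r → r < q → q ≤ t → t < T → V t r = (U t q).comp (V q r))
    (hScont : ContinuousOn S (Ico s T)) (hy : ContinuousOn y (Ico s T))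
    (hsol : SolvesClosedLoop U V S s T x y) {q : ℝ} (hsq : s ≤ q) :
    SolvesClosedLoop U V S q T (y q) y := by
  rintro t ⟨hqt, htT⟩
  have hint {a b t' : ℝ} (hsa : s ≤ a) (hab : a ≤ b) (hbt : b ≤ t') (htT' : t' < T) :=
    intervalIntegrable_closedLoop_integrand hα hVcont hVbound hScont hy hsa hab hbt htT'
  have hsplit : ∫ r in s..t, V t r (S r (y r)) =
      (∫ r in s..q, V t r (S r (y r))) + ∫ r in q..t, V t r (S r (y r)) :=
    (integral_add_adjacent_intervals (hint le_rfl hsq hqt htT) (hint hsq hqt le_rfl htT)).symm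
  have hfactor : ∫ r in s..q, V t r (S r (y r)) = U t q (∫ r in s..q, V q r (S r (y r))) :=
    intervalIntegral_clm_apply_eq_apply_intervalIntegral (U t q) hsq
      (fun r hr => hVfact r q t hr.1.le hr.2 hqt htT) (hint le_rfl hsq le_rfl (hqt.trans_lt htT))
  have hUs : U t s x = U t q (U q s x) := by rw [← hUev s q t le_rfl hsq hqt htT]; rfl
  rw [hsol t ⟨hsq.trans hqt, htT⟩, hsol q ⟨hsq, hqt.trans_lt htT⟩, hsplit, hfactor, hUs,
    map_sub]
  abel

end ClosedLoop

theorem closed_loop_solution_transitivity_general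
    {H U₀ : Type*} [NormedAddCommGroup H] [InnerProductSpace ℂ H] [CompleteSpace H]
    [NormedAddCommGroup U₀] [InnerProductSpace ℂ U₀]
    (s T : ℝ) (α c : ℝ) (hα : α ∈ Set.Ioo (0 : ℝ) 1)
    (U : ℝ → ℝ → H →L[ℂ] H) (V : ℝ → ℝ → U₀ →L[ℂ] H) (S : ℝ → H →L[ℂ] U₀)
    -- (i) strong continuity, local uniform boundedness, identity and evolution property of U
    (hUev : ∀ r q t : ℝ, s ≤ r → r ≤ q → q ≤ t → t < T →
      (U t q).comp (U q r) = U t r)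
    -- (ii) norm continuity, weakly singular bound and factorization of V
    (hVcont : ContinuousOn (fun p : ℝ × ℝ => V p.1 p.2)
      {p : ℝ × ℝ | s ≤ p.2 ∧ p.2 < p.1 ∧ p.1 < T})
    (hVbound : ∀ t r : ℝ, s ≤ r → r < t → t < T →
      ‖V t r‖ ≤ c * (t - r) ^ (α - 1))
    (hVfact : ∀ r q t : ℝ, s ≤ r → r < q → q ≤ t → t < T →
      V t r = (U t q).comp (V q r))
    -- (iii) norm continuity of S
    (hScont : ContinuousOn S (Set.Ico s T))
    -- Φ(·,σ)x is the unique continuous solution of the closed loop equation on [σ,T)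
    (Φ : ℝ → ℝ → H → H)
    (hΦcont : ∀ σ ∈ Set.Ico s T, ∀ x : H,
      ContinuousOn (fun t => Φ t σ x) (Set.Ico σ T))
    (hΦeq : ∀ σ ∈ Set.Ico s T, ∀ x : H, ∀ t ∈ Set.Ico σ T,
      Φ t σ x = U t σ x - ∫ r in σ..t, V t r (S r (Φ r σ x)))
    (hΦuniq : ∀ σ ∈ Set.Ico s T, ∀ x : H, ∀ y : ℝ → H,
      ContinuousOn y (Set.Ico σ T) →
      (∀ t ∈ Set.Ico σ T, y t = U t σ x - ∫ r in σ..t, V t r (S r (y r))) →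
      ∀ t ∈ Set.Ico σ T, y t = Φ t σ x) :
    ∀ q t : ℝ, s ≤ q → q ≤ t → t < T → ∀ x : H, Φ t s x = Φ t q (Φ q s x) := by
  intro q t hsq hqt htT x
  have hs : s ∈ Ico s T := ⟨le_rfl, (hsq.trans hqt).trans_lt htT⟩
  have hcont := hΦcont s hs x
  exact hΦuniq q ⟨hsq, hqt.trans_lt htT⟩ (Φ q s x) (fun t => Φ t s x)
    (hcont.mono (Ico_subset_Ico_left hsq))
    (SolvesClosedLoop.restart hα.1 hUev hVcont hVbound hVfact hScont hcont (hΦeq s hs x) hsq)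
    t ⟨hqt, htT⟩

/-- Transitivity `Φ(t,s) = Φ(t,q) Φ(q,s)` of the solution of the closed loop
equation `y(t) = U(t,σ)x − ∫_σ^t V(t,r) S(r) y(r) dr`, where `U` is an evolution
operator, `V` has a weakly singular norm bound and factorizes as
`V(t,r) = U(t,q)V(q,r)`, and `S` is norm-continuous. -/
theorem closed_loop_solution_transitivity
    {H U₀ : Type*} [NormedAddCommGroup H] [InnerProductSpace ℂ H] [CompleteSpace H]
    [NormedAddCommGroup U₀] [InnerProductSpace ℂ U₀] [CompleteSpace U₀]
    (s T : ℝ) (hsT : s < T) (α c : ℝ) (hα : α ∈ Set.Ioo (0 : ℝ) 1) (hc : 0 ≤ c)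
    (U : ℝ → ℝ → H →L[ℂ] H) (V : ℝ → ℝ → U₀ →L[ℂ] H) (S : ℝ → H →L[ℂ] U₀)
    -- (i) strong continuity, local uniform boundedness, identity and evolution property of U
    (hUstrong : ∀ x : H, ContinuousOn (fun p : ℝ × ℝ => U p.1 p.2 x)
      {p : ℝ × ℝ | s ≤ p.2 ∧ p.2 ≤ p.1 ∧ p.1 < T})
    (hUbdd : ∀ Kc : Set (ℝ × ℝ), IsCompact Kc →
      Kc ⊆ {p : ℝ × ℝ | s ≤ p.2 ∧ p.2 ≤ p.1 ∧ p.1 < T} →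
      ∃ M : ℝ, ∀ p ∈ Kc, ‖U p.1 p.2‖ ≤ M)
    (hUid : ∀ t : ℝ, s ≤ t → t < T → U t t = 1)
    (hUev : ∀ r q t : ℝ, s ≤ r → r ≤ q → q ≤ t → t < T →
      (U t q).comp (U q r) = U t r)
    -- (ii) norm continuity, weakly singular bound and factorization of V
    (hVcont : ContinuousOn (fun p : ℝ × ℝ => V p.1 p.2)
      {p : ℝ × ℝ | s ≤ p.2 ∧ p.2 < p.1 ∧ p.1 < T})
    (hVbound : ∀ t r : ℝ, s ≤ r → r < t → t < T →
      ‖V t r‖ ≤ c * (t - r) ^ (α - 1))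
    (hVfact : ∀ r q t : ℝ, s ≤ r → r < q → q ≤ t → t < T →
      V t r = (U t q).comp (V q r))
    -- (iii) norm continuity of S
    (hScont : ContinuousOn S (Set.Ico s T))
    -- Φ(·,σ)x is the unique continuous solution of the closed loop equation on [σ,T)
    (Φ : ℝ → ℝ → H → H)
    (hΦcont : ∀ σ ∈ Set.Ico s T, ∀ x : H,
      ContinuousOn (fun t => Φ t σ x) (Set.Ico σ T))
    (hΦeq : ∀ σ ∈ Set.Ico s T, ∀ x : H, ∀ t ∈ Set.Ico σ T,
      Φ t σ x = U t σ x - ∫ r in σ..t, V t r (S r (Φ r σ x)))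
    (hΦuniq : ∀ σ ∈ Set.Ico s T, ∀ x : H, ∀ y : ℝ → H,
      ContinuousOn y (Set.Ico σ T) →
      (∀ t ∈ Set.Ico σ T, y t = U t σ x - ∫ r in σ..t, V t r (S r (y r))) →
      ∀ t ∈ Set.Ico σ T, y t = Φ t σ x) :
    ∀ q t : ℝ, s ≤ q → q ≤ t → t < T → ∀ x : H, Φ t s x = Φ t q (Φ q s x) :=
  closed_loop_solution_transitivity_general s T α c hα U V S hUev hVcont hVbound hVfact hScont Φ
    hΦcont hΦeq hΦuniq
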